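/- If the character c does not occur in the string T, then for all strings U and V the delete–insert edit distance satisfies d_DI(U ++ [c] ++ V, T) = 1 + d_DI(U ++ V, T); that is, a character of the source that does not occur in the target must be deleted in any optimal edition. -/
import Mathlib


/-- `StepsIn R k S T` holds if there is a sequence of exactly `k` steps of the
relation `R` transforming `S` into `T`. -/
def StepsIn {α : Type*} (R : List α → List α → Prop) : ℕ → List α → List α → Prop
  | 0, S, T => S = T
  | n + 1, S, T => ∃ M, R S M ∧ StepsIn R n M T

/-- A single delete or insert operation on a string. -/
inductive DIStep {α : Type*} : List α → List α → Prop
  | del (U V : List α) (c : α) : DIStep (U ++ [c] ++ V) (U ++ V)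
  | ins (U V : List α) (c : α) : DIStep (U ++ V) (U ++ [c] ++ V)

/-- The delete–insert edit distance: the minimum number of single-character
deletions and insertions transforming `S` into `T`. -/
noncomputable def dDI {α : Type*} (S T : List α) : ℕ :=
  sInf {n | StepsIn DIStep n S T}

/-- The length of a longest common subsequence of `S` and `T`. -/
noncomputable def lcss {α : Type*} (S T : List α) : ℕ :=
  sSup {n | ∃ L : List α, L.Sublist S ∧ L.Sublist T ∧ L.length = n}

lemma stepsIn_trans {α : Type*} {R : List α → List α → Prop} :
    ∀ {m n : ℕ} {S M T : List α}, StepsIn R m S M → StepsIn R n M T →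
      StepsIn R (m + n) S T := by
  intro m
  induction m with
  | zero => intro n S M T h1 h2; cases h1; simpa using h2
  | succ k ih =>
      intro n S M T h1 h2
      obtain ⟨P, hSP, hPM⟩ := h1
      rw [Nat.add_right_comm]
      exact ⟨P, hSP, ih hPM h2⟩

lemma DIStep.cons {α : Type*} {S T : List α} (x : α) (h : DIStep S T) :
    DIStep (x :: S) (x :: T) := by
  cases h with
  | del U V c => simpa using DIStep.del (x :: U) V c
  | ins U V c => simpa using DIStep.ins (x :: U) V c

lemma stepsIn_nil {α : Type*} (S : List α) :
    StepsIn DIStep S.length S [] := by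
  induction S with
  | nil => rfl
  | cons a S ih =>
      exact ⟨S, by simpa using DIStep.del [] S a, ih⟩

lemma stepsIn_cons {α : Type*} {S T : List α} (x : α) :
    ∀ {n : ℕ}, StepsIn DIStep n S T → StepsIn DIStep n (x :: S) (x :: T) := by
  intro n
  induction n generalizing S with
  | zero => intro h; cases h; rfl
  | succ k ih =>
      rintro ⟨M, hSM, hMT⟩
      exact ⟨x :: M, hSM.cons x, ih hMT⟩

lemma stepsIn_of_nil {α : Type*} (T : List α) :
    StepsIn DIStep T.length [] T := by
  induction T with
  | nil => rfl
  | cons a T ih =>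
      exact ⟨[a], by simpa using DIStep.ins [] [] a, stepsIn_cons a ih⟩

lemma dDI_set_nonempty {α : Type*} (S T : List α) :
    {n | StepsIn DIStep n S T}.Nonempty :=
  ⟨S.length + T.length, stepsIn_trans (stepsIn_nil S) (stepsIn_of_nil T)⟩

/-- One step out of a list containing a marked `c` either removes exactly it or
keeps it, and the corresponding step can be done ignoring `c`. -/
lemma step_out {α : Type*} {U V M : List α} {c : α}
    (h : DIStep (U ++ [c] ++ V) M) :
    M = U ++ V ∨ ∃ U' V', M = U' ++ [c] ++ V' ∧ DIStep (U ++ V) (U' ++ V') := by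
  generalize hS : U ++ [c] ++ V = S at h
  cases h with
  | del A B d =>
    rw [List.append_assoc, List.append_assoc] at hS
    rcases List.append_eq_append_iff.mp hS with ⟨w, hA, hw⟩ | ⟨w, hU, hw⟩
    · cases w with
      | nil =>
          simp only [List.append_nil] at hA
          obtain ⟨rfl, rfl⟩ : c = d ∧ V = B := by simpa using hw
          exact Or.inl (by simp [hA])
      | cons x w' =>
          obtain ⟨rfl, rfl⟩ : c = x ∧ V = w' ++ ([d] ++ B) := by simpa using hw
          refine Or.inr ⟨U, w' ++ B, by simp [hA], ?_⟩
          have := DIStep.del (U ++ w') B d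
          simpa using this
    · cases w with
      | nil =>
          simp only [List.append_nil] at hU
          obtain ⟨rfl, rfl⟩ : d = c ∧ B = V := by simpa using hw
          exact Or.inl (by simp [hU])
      | cons x w' =>
          obtain ⟨rfl, rfl⟩ : d = x ∧ B = w' ++ ([c] ++ V) := by simpa using hw
          refine Or.inr ⟨A ++ w', V, by simp, ?_⟩
          have := DIStep.del A (w' ++ V) d
          simpa [hU] using this
  | ins A B d =>
    rw [List.append_assoc] at hS
    rcases List.append_eq_append_iff.mp hS with ⟨w, hA, hw⟩ | ⟨w, hU, hw⟩
    · cases w with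
      | nil =>
          simp only [List.append_nil] at hA
          have hB : B = c :: V := by simpa using hw.symm
          refine Or.inr ⟨U ++ [d], V, by simp [hA, hB], ?_⟩
          have := DIStep.ins U V d
          simpa using this
      | cons x w' =>
          obtain ⟨rfl, rfl⟩ : c = x ∧ V = w' ++ B := by simpa using hw
          refine Or.inr ⟨U, w' ++ [d] ++ B, by simp [hA], ?_⟩
          have := DIStep.ins (U ++ w') B d
          simpa using this
    · refine Or.inr ⟨A ++ [d] ++ w, V, by simp [hw], ?_⟩
      have := DIStep.ins A (w ++ V) d
      simpa [hU] using this

lemma key {α : Type*} {T : List α} {c : α} (hc : c ∉ T) :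
    ∀ (k : ℕ) (U V : List α), StepsIn DIStep k (U ++ [c] ++ V) T →
      ∃ m, k = m + 1 ∧ StepsIn DIStep m (U ++ V) T := by
  intro k
  induction k with
  | zero =>
      intro U V h
      exact absurd (h ▸ (by simp : c ∈ U ++ [c] ++ V)) hc
  | succ m ih =>
      intro U V h
      obtain ⟨M, hstep, hM⟩ := h
      rcases step_out hstep with rfl | ⟨U', V', rfl, hstep'⟩
      · exact ⟨m, rfl, hM⟩
      · obtain ⟨m', rfl, hm'⟩ := ih U' V' hM
        exact ⟨m' + 1, rfl, ⟨U' ++ V', hstep', hm'⟩⟩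

theorem dDI_of_not_mem {α : Type*} [DecidableEq α] (U V T : List α) (c : α)
    (hc : c ∉ T) :
    dDI (U ++ [c] ++ V) T = 1 + dDI (U ++ V) T := by
  have hne : {n | StepsIn DIStep n (U ++ V) T}.Nonempty := dDI_set_nonempty _ _
  apply le_antisymm
  · have hmem : dDI (U ++ V) T ∈ {n | StepsIn DIStep n (U ++ V) T} :=
      Nat.sInf_mem hne
    have : StepsIn DIStep (dDI (U ++ V) T + 1) (U ++ [c] ++ V) T :=
      ⟨U ++ V, DIStep.del U V c, hmem⟩
    have := Nat.sInf_le (by exact this : (dDI (U ++ V) T + 1) ∈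
      {n | StepsIn DIStep n (U ++ [c] ++ V) T})
    simpa [dDI, Nat.add_comm] using this
  · have hmem : dDI (U ++ [c] ++ V) T ∈ {n | StepsIn DIStep n (U ++ [c] ++ V) T} :=
      Nat.sInf_mem (dDI_set_nonempty _ _)
    obtain ⟨m, hm, hsteps⟩ := key hc _ U V hmem
    have h1 : dDI (U ++ V) T ≤ m := Nat.sInf_le hsteps
    omega
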